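/- arXiv:1404.1631 — 5 statements merged into one kernel-verified Lean document; each statement's English description precedes it below -/
import Mathlib

section
/- Let T : ℝ[x] → ℝ[x] be a linear operator with differential coefficients (Q_k)_{k≥0} satisfying deg Q_k ≤ k for every k. For n, k ∈ ℕ₀ set b_{n,k} = Σ_{j=0}^{k} C(k,j) · Q_{j+n}^{(j)}(0), and let T_n : ℝ[x] → ℝ[x] be the linear operator determined by T_n[x^k] = b_{n,k} x^k. Then for every p ∈ ℝ[x] one has T[p] = Σ_{n≥0} T_n[p^{(n)}], where only finitely many terms are nonzero. Moreover the representation is unique: if (c_{n,k}) is any family of reals and S_n are the linear operators with S_n[x^k] = c_{n,k} x^k such that T[p] = Σ_{n≥0} S_n[p^{(n)}] for every p ∈ ℝ[x], then c_{n,k} = b_{n,k} for all n, k. -/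
open Polynomial Finset

noncomputable section

/-- The physicists' Hermite polynomials. -/
def hermitePoly (n : ℕ) : Polynomial ℝ :=
  ∑ k ∈ Finset.range (n / 2 + 1),
    Polynomial.C ((-1 : ℝ) ^ k * n.factorial * 2 ^ (n - 2 * k) /
      (k.factorial * (n - 2 * k).factorial)) * Polynomial.X ^ (n - 2 * k)

/-- The Laguerre polynomials. -/
def laguerrePoly (n : ℕ) : Polynomial ℝ :=
  ∑ k ∈ Finset.range (n + 1),
    Polynomial.C ((-1 : ℝ) ^ k / k.factorial * n.choose k) * Polynomial.X ^ k

/-- A real polynomial is hyperbolic if all of its complex roots are real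
(the zero polynomial counts as hyperbolic). -/
def Hyperbolic (p : Polynomial ℝ) : Prop :=
  p = 0 ∨ ∀ z : ℂ, Polynomial.aeval z p = 0 → z.im = 0

/-- A linear operator on ℝ[x] preserves hyperbolicity. -/
def HypPreserving (T : Polynomial ℝ →ₗ[ℝ] Polynomial ℝ) : Prop :=
  ∀ p : Polynomial ℝ, Hyperbolic p → Hyperbolic (T p)

/-- Classical multiplier sequence. -/
def ClassicalMS (γ : ℕ → ℝ) : Prop :=
  ∃ T : Polynomial ℝ →ₗ[ℝ] Polynomial ℝ,
    (∀ n, T (Polynomial.X ^ n) = γ n • Polynomial.X ^ n) ∧ HypPreserving T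

/-- Hermite multiplier sequence. -/
def HermiteMS (γ : ℕ → ℝ) : Prop :=
  ∃ T : Polynomial ℝ →ₗ[ℝ] Polynomial ℝ,
    (∀ n, T (hermitePoly n) = γ n • hermitePoly n) ∧ HypPreserving T

/-- Laguerre multiplier sequence. -/
def LaguerreMS (γ : ℕ → ℝ) : Prop :=
  ∃ T : Polynomial ℝ →ₗ[ℝ] Polynomial ℝ,
    (∀ n, T (laguerrePoly n) = γ n • laguerrePoly n) ∧ HypPreserving T

/-- A sequence is trivial if all entries vanish except possibly two at consecutive indices. -/
def TrivialSeq (γ : ℕ → ℝ) : Prop :=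
  ∃ m : ℕ, ∀ n, n ≠ m → n ≠ m + 1 → γ n = 0


private lemma stmt0_descFactorial_add_eq (m n j : ℕ) :
    m.descFactorial (n + j) = m.descFactorial n * (m - n).descFactorial j := by
  induction j with
  | zero => simp
  | succ j ih =>
      rw [← Nat.add_assoc, Nat.descFactorial_succ, Nat.descFactorial_succ, ih]
      have : m - (n + j) = m - n - j := by omega
      rw [this]; ring

private lemma stmt0_descFact_split (m n j : ℕ) :
    (m.descFactorial (n + j) : ℝ) = m.descFactorial n * ((m - n).choose j) * j.factorial := by
  rw [stmt0_descFactorial_add_eq, Nat.descFactorial_eq_factorial_mul_choose (m - n) j]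
  push_cast; ring

private lemma stmt0_eval_zero_iter_deriv (p : Polynomial ℝ) (j : ℕ) :
    (Polynomial.derivative^[j] p).eval 0 = j.factorial * p.coeff j := by
  rw [← Polynomial.coeff_zero_eq_eval_zero, Polynomial.coeff_iterate_derivative]
  simp [Nat.descFactorial_self, nsmul_eq_mul]

private lemma stmt0_mono_key (Q : ℕ → Polynomial ℝ) (hdeg : ∀ k, (Q k).degree ≤ k)
    (b : ℕ → ℕ → ℝ)
    (hb : ∀ n k, b n k = ∑ j ∈ Finset.range (k + 1),
      (k.choose j : ℝ) * (Polynomial.derivative^[j] (Q (j + n))).eval 0)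
    (Tn : ℕ → Polynomial ℝ →ₗ[ℝ] Polynomial ℝ)
    (hTn : ∀ n k, Tn n (Polynomial.X ^ k) = b n k • Polynomial.X ^ k) (m : ℕ) :
    ∑ k ∈ Finset.range (m + 1), Q k * Polynomial.derivative^[k] ((X : Polynomial ℝ) ^ m) =
      ∑ n ∈ Finset.range (m + 1), Tn n (Polynomial.derivative^[n] ((X : Polynomial ℝ) ^ m)) := by
  have hL : ∀ k ∈ Finset.range (m + 1),
      Q k * Polynomial.derivative^[k] ((X : Polynomial ℝ) ^ m) =
      ∑ j ∈ Finset.range (k + 1), C ((Q k).coeff j * m.descFactorial k) * X ^ (m - k + j) := by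
    intro k _
    rw [Polynomial.iterate_derivative_X_pow_eq_C_mul]
    conv_lhs => rw [(Q k).as_sum_range' (k + 1)
      (Nat.lt_succ_of_le (Polynomial.natDegree_le_iff_degree_le.2 (hdeg k)))]
    rw [Finset.sum_mul]
    refine Finset.sum_congr rfl fun j _ => ?_
    rw [← Polynomial.C_mul_X_pow_eq_monomial, Polynomial.C_mul]
    ring_nf
  have hR : ∀ n ∈ Finset.range (m + 1),
      Tn n (Polynomial.derivative^[n] ((X : Polynomial ℝ) ^ m)) =
      ∑ j ∈ Finset.range (m - n + 1),
        C ((m.descFactorial n : ℝ) * ((m - n).choose j) * j.factorial * (Q (j + n)).coeff j) *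
          X ^ (m - n) := by
    intro n _
    rw [Polynomial.iterate_derivative_X_pow_eq_smul, map_smul, hTn, hb, smul_smul,
      Finset.mul_sum, Finset.sum_smul]
    refine Finset.sum_congr rfl fun j _ => ?_
    rw [stmt0_eval_zero_iter_deriv, Polynomial.smul_eq_C_mul]
    ring_nf
  rw [Finset.sum_congr rfl hL, Finset.sum_congr rfl hR, Finset.sum_sigma', Finset.sum_sigma']
  refine Finset.sum_nbij' (fun x => ⟨x.1 - x.2, x.2⟩) (fun x => ⟨x.1 + x.2, x.2⟩) ?_ ?_ ?_ ?_ ?_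
  · rintro ⟨k, j⟩ hx
    simp only [Finset.mem_sigma, Finset.mem_range] at hx ⊢
    omega
  · rintro ⟨n, j⟩ hx
    simp only [Finset.mem_sigma, Finset.mem_range] at hx ⊢
    omega
  · rintro ⟨k, j⟩ hx
    simp only [Finset.mem_sigma, Finset.mem_range] at hx
    have h : k - j + j = k := by omega
    simp [h]
  · rintro ⟨n, j⟩ hx
    simp only [Finset.mem_sigma, Finset.mem_range] at hx
    have h : n + j - j = n := by omega
    simp [h]
  · rintro ⟨k, j⟩ hx
    simp only [Finset.mem_sigma, Finset.mem_range] at hx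
    have h1 : j + (k - j) = k := by omega
    have h2 : m - (k - j) = m - k + j := by omega
    have h3 : (m.descFactorial k : ℝ) =
        m.descFactorial (k - j) * ((m - k + j).choose j) * j.factorial := by
      have := stmt0_descFact_split m (k - j) j
      rw [show k - j + j = k by omega, show m - (k - j) = m - k + j by omega] at this
      exact this
    rw [h1, h2, h3]
    congr 1
    ring_nf

/-- operator diagonalization `T = Σ Tₙ Dⁿ` of a linear operator whose
differential coefficients satisfy deg Q_k ≤ k, together with uniqueness. -/
theorem stmt_0
    (T : Polynomial ℝ →ₗ[ℝ] Polynomial ℝ) (Q : ℕ → Polynomial ℝ)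
    (hQ : ∀ p : Polynomial ℝ,
      T p = ∑ k ∈ Finset.range (p.natDegree + 1), Q k * (Polynomial.derivative^[k] p))
    (hdeg : ∀ k, (Q k).degree ≤ k)
    (b : ℕ → ℕ → ℝ)
    (hb : ∀ n k, b n k = ∑ j ∈ Finset.range (k + 1),
      (k.choose j : ℝ) * (Polynomial.derivative^[j] (Q (j + n))).eval 0)
    (Tn : ℕ → Polynomial ℝ →ₗ[ℝ] Polynomial ℝ)
    (hTn : ∀ n k, Tn n (Polynomial.X ^ k) = b n k • Polynomial.X ^ k) :
    (∀ p : Polynomial ℝ,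
      T p = ∑ n ∈ Finset.range (p.natDegree + 1), Tn n (Polynomial.derivative^[n] p)) ∧
    (∀ (c : ℕ → ℕ → ℝ) (S : ℕ → Polynomial ℝ →ₗ[ℝ] Polynomial ℝ),
      (∀ n k, S n (Polynomial.X ^ k) = c n k • Polynomial.X ^ k) →
      (∀ p : Polynomial ℝ,
        T p = ∑ n ∈ Finset.range (p.natDegree + 1), S n (Polynomial.derivative^[n] p)) →
      ∀ n k, c n k = b n k) := by
  have hmono : ∀ m, T ((X : Polynomial ℝ) ^ m) =
      ∑ n ∈ Finset.range (m + 1), Tn n (Polynomial.derivative^[n] ((X : Polynomial ℝ) ^ m)) := by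
    intro m
    rw [hQ, Polynomial.natDegree_X_pow]
    exact stmt0_mono_key Q hdeg b hb Tn hTn m
  constructor
  · intro p
    set N := p.natDegree + 1 with hN
    have hmono' : ∀ m < N, T ((X : Polynomial ℝ) ^ m) =
        ∑ n ∈ Finset.range N, Tn n (Polynomial.derivative^[n] ((X : Polynomial ℝ) ^ m)) := by
      intro m hm
      rw [hmono m]
      apply Finset.sum_subset (Finset.range_subset_range.2 (by omega))
      intro n _ hn
      rw [Finset.mem_range] at hn
      rw [Polynomial.iterate_derivative_eq_zero (by rw [Polynomial.natDegree_X_pow]; omega),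
        map_zero]
    conv_lhs => rw [p.as_sum_range' N (Nat.lt_succ_self _)]
    rw [map_sum]
    calc ∑ i ∈ Finset.range N, T (Polynomial.monomial i (p.coeff i))
        = ∑ i ∈ Finset.range N, ∑ n ∈ Finset.range N,
            p.coeff i • Tn n (Polynomial.derivative^[n] ((X : Polynomial ℝ) ^ i)) := by
          refine Finset.sum_congr rfl fun i hi => ?_
          rw [← Polynomial.smul_X_eq_monomial, map_smul, hmono' i (Finset.mem_range.1 hi),
            Finset.smul_sum]
      _ = ∑ n ∈ Finset.range N, ∑ i ∈ Finset.range N,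
            p.coeff i • Tn n (Polynomial.derivative^[n] ((X : Polynomial ℝ) ^ i)) :=
          Finset.sum_comm
      _ = ∑ n ∈ Finset.range N, Tn n (Polynomial.derivative^[n] p) := by
          refine Finset.sum_congr rfl fun n _ => ?_
          conv_rhs => rw [p.as_sum_range' N (Nat.lt_succ_self _)]
          rw [Polynomial.iterate_derivative_sum, map_sum]
          refine Finset.sum_congr rfl fun i _ => ?_
          rw [← Polynomial.smul_X_eq_monomial, Polynomial.iterate_derivative_smul, map_smul]
  · intro c S hS hSp n k
    have hcoeff : ∀ (γ : ℕ → ℕ → ℝ) (U : ℕ → Polynomial ℝ →ₗ[ℝ] Polynomial ℝ),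
        (∀ a m, U a (X ^ m) = γ a m • X ^ m) →
        (∑ i ∈ Finset.range (n + k + 1),
            U i (Polynomial.derivative^[i] ((X : Polynomial ℝ) ^ (n + k)))).coeff k =
          ((n + k).descFactorial n : ℝ) * γ n k := by
      intro γ U hU
      rw [Polynomial.finset_sum_coeff]
      rw [Finset.sum_eq_single n _ (fun h => absurd (Finset.mem_range.2 (by omega)) h)]
      · rw [Polynomial.iterate_derivative_X_pow_eq_smul, map_smul, hU, Polynomial.coeff_smul,
          Polynomial.coeff_smul, Polynomial.coeff_X_pow, show n + k - n = k by omega, if_pos rfl]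
        simp [smul_eq_mul]
      · intro i hi hne
        rw [Finset.mem_range] at hi
        rw [Polynomial.iterate_derivative_X_pow_eq_smul, map_smul, hU, Polynomial.coeff_smul,
          Polynomial.coeff_smul, Polynomial.coeff_X_pow, if_neg (by omega)]
        simp
    have e1 := hSp ((X : Polynomial ℝ) ^ (n + k))
    rw [Polynomial.natDegree_X_pow] at e1
    have e2 : T ((X : Polynomial ℝ) ^ (n + k)) =
        ∑ i ∈ Finset.range (n + k + 1),
          Tn i (Polynomial.derivative^[i] ((X : Polynomial ℝ) ^ (n + k))) := hmono (n + k)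
    have hd : ((n + k).descFactorial n : ℝ) ≠ 0 := by
      refine Nat.cast_ne_zero.2 fun h => ?_
      have := Nat.descFactorial_eq_zero_iff_lt.1 h
      omega
    apply mul_left_cancel₀ hd
    rw [← hcoeff c S hS, ← hcoeff b Tn hTn, ← e1, ← e2]
end
end

section
/- Let T : ℝ[x] → ℝ[x] be an arbitrary linear operator with differential coefficients (Q_k)_{k≥0}, and set Q_m = 0 for m < 0. For n ∈ ℤ and k ∈ ℕ₀ define b_{n,k} = Σ_{j=0}^{k} C(k,j) · Q_{j+n}^{(j)}(0). Then: (i) for each n ∈ ℤ, the linear operator S_n defined by S_n[p] = Σ_{k≥0, k+n≥0} (Q_{k+n}^{(k)}(0)/k!) x^k p^{(k)} satisfies S_n[x^k] = b_{n,k} x^k for every k ∈ ℕ₀; (ii) for every p ∈ ℝ[x], T[p] = Σ_{n∈ℤ} Σ_{k≥0, k+n≥0} (Q_{k+n}^{(k)}(0)/k!) x^k p^{(k+n)}, where only finitely many terms are nonzero; (iii) the family (b_{n,k})_{n∈ℤ, k∈ℕ₀} arising this way is uniquely determined by T. -/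
open Polynomial Finset

noncomputable section

/-!
Expanding each differential coefficient in its Taylor series at `0`,
`Q_m = Σ_k (Q_m^{(k)}(0) / k!) xᵏ`, turns `T = Σ_m Q_m Dᵐ` into the double sum
`Σ_{m,k} (Q_m^{(k)}(0) / k!) xᵏ Dᵐ`; regrouping along the diagonals `n = m - k` gives (ii).
Since `xʲ Dʲ xᵏ = k! / (k - j)! · xᵏ`, each diagonal operator `Sₙ` has eigenvalues
`Σ_j C(k, j) Q_{j+n}^{(j)}(0)`, which is (i). For (iii), `T xᵐ = Σ_{k ≤ m} Q_k Dᵏ xᵐ` and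
`Dᵐ xᵐ = m!` is a nonzero constant, so the `Q_k` are determined by `T` one after another.
-/

open Function

section Reindex

variable {α β M : Type*} [AddCommMonoid M] {f : β → M} {g : α → β}

theorem finsum_comp_of_support_subset_range (hg : Injective g) (hf : support f ⊆ Set.range g) :
    ∑ᶠ a, f (g a) = ∑ᶠ b, f b := by
  rw [← finsum_mem_range hg, finsum_mem_def, Set.indicator_eq_self.2 hf]

theorem Function.HasFiniteSupport.of_comp_of_support_subset_range (hf : support f ⊆ Set.range g)
    (hfg : HasFiniteSupport (f ∘ g)) : HasFiniteSupport f := by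
  refine (hfg.image g).subset ?_
  rintro _ hb
  obtain ⟨a, rfl⟩ := hf hb
  exact ⟨a, hb, rfl⟩

end Reindex

section Polynomial

variable {R : Type*} [Semiring R]

theorem finsum_coeff_smul_X_pow_mul (P q : R[X]) : ∑ᶠ k, P.coeff k • (X ^ k * q) = P * q := by
  rw [finsum_eq_sum_of_support_subset _ (s := P.support) fun k hk => by
    simpa using left_ne_zero_of_smul hk]
  conv_rhs => rw [P.as_sum_support_C_mul_X_pow, sum_mul]
  simp only [smul_eq_C_mul, mul_assoc]

theorem hasFiniteSupport_coeff_smul_X_pow_mul_iterate_derivative (Q : ℕ → R[X]) (p : R[X]) :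
    HasFiniteSupport fun mk : ℕ × ℕ => (Q mk.1).coeff mk.2 • (X ^ mk.2 * derivative^[mk.1] p) := by
  refine ((Set.finite_Iic p.natDegree).biUnion fun m _ =>
    (Q m).support.finite_toSet.image (Prod.mk m)).subset ?_
  rintro ⟨m, k⟩ hmk
  have hm : m ≤ p.natDegree := by
    by_contra! h
    simp [iterate_derivative_eq_zero h] at hmk
  have hk : k ∈ (Q m).support := by
    simpa using left_ne_zero_of_smul hmk
  exact Set.mem_biUnion hm ⟨k, hk, rfl⟩

theorem finsum_coeff_smul_X_pow_mul_iterate_derivative (Q : ℕ → R[X]) (p : R[X]) :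
    ∑ᶠ mk : ℕ × ℕ, (Q mk.1).coeff mk.2 • (X ^ mk.2 * derivative^[mk.1] p) =
      ∑ m ∈ range (p.natDegree + 1), Q m * derivative^[m] p := by
  rw [finsum_curry _ (hasFiniteSupport_coeff_smul_X_pow_mul_iterate_derivative Q p)]
  simp only [finsum_coeff_smul_X_pow_mul]
  refine finsum_eq_sum_of_support_subset _ fun m hm => ?_
  by_contra! h
  simp only [coe_range, Set.mem_Iio, not_lt] at h
  exact hm (by simp [iterate_derivative_eq_zero (show p.natDegree < m by omega)])

end Polynomial

theorem eq_of_sum_mul_iterate_derivative_eq {R : Type*} [CommRing R] [IsDomain R] [CharZero R]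
    {Q Q' : ℕ → R[X]}
    (h : ∀ p : R[X], ∑ k ∈ range (p.natDegree + 1), Q k * derivative^[k] p =
      ∑ k ∈ range (p.natDegree + 1), Q' k * derivative^[k] p) :
    Q = Q' := by
  funext m
  induction m using Nat.strong_induction_on with
  | _ m ih =>
    have hm := h (X ^ m)
    rw [natDegree_X_pow, sum_range_succ, sum_range_succ,
      sum_congr rfl fun k hk => by rw [ih k (mem_range.1 hk)], add_left_cancel_iff] at hm
    refine mul_right_cancel₀ ?_ hm
    rw [iterate_derivative_X_pow_eq_smul, Nat.sub_self, pow_zero, Nat.descFactorial_self]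
    simp [Nat.factorial_ne_zero]

section Field

variable {K : Type*} [Field K]

theorem iterate_derivative_eval_zero_div_factorial [CharZero K] (p : K[X]) (k : ℕ) :
    (derivative^[k] p).eval 0 / k.factorial = p.coeff k := by
  rw [← coeff_zero_eq_eval_zero, coeff_iterate_derivative, zero_add, Nat.descFactorial_self,
    nsmul_eq_mul, mul_div_cancel_left₀ _ (Nat.cast_ne_zero.2 k.factorial_ne_zero)]

theorem sum_div_factorial_smul_X_pow_mul_iterate_derivative_X_pow [CharZero K] (a : ℕ → K) (k : ℕ) :
    ∑ j ∈ range (k + 1), (a j / j.factorial) • (X ^ j * derivative^[j] (X ^ k : K[X])) =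
      (∑ j ∈ range (k + 1), (k.choose j : K) * a j) • X ^ k := by
  rw [sum_smul]
  refine sum_congr rfl fun j hj => ?_
  rw [iterate_derivative_X_pow_eq_smul, mul_smul_comm, ← pow_add,
    Nat.add_sub_cancel' (Nat.lt_succ_iff.1 (mem_range.1 hj)), smul_smul,
    Nat.descFactorial_eq_factorial_mul_choose]
  have : (j.factorial : K) ≠ 0 := Nat.cast_ne_zero.2 j.factorial_ne_zero
  congr 1
  push_cast
  field_simp

/-- The term `(Q_{k+n}^{(k)}(0) / k!) xᵏ p^{(k+n)}` at `q = (n, k)`. When `k + n < 0` the order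
`toNat` of the derivative is junk (`0`), but then the coefficient vanishes as `Qz` is zero on
negative indices. -/
def laurentTerm (Qz : ℤ → K[X]) (p : K[X]) (q : ℤ × ℕ) : K[X] :=
  ((derivative^[q.2] (Qz (q.2 + q.1))).eval 0 / q.2.factorial) •
    (X ^ q.2 * derivative^[((q.2 : ℤ) + q.1).toNat] p)

variable {Qz : ℤ → K[X]}

theorem laurentTerm_natCast_sub [CharZero K] (p : K[X]) (m k : ℕ) :
    laurentTerm Qz p ((m : ℤ) - k, k) = (Qz m).coeff k • (X ^ k * derivative^[m] p) := by
  simp only [laurentTerm, add_sub_cancel, Int.toNat_natCast,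
    iterate_derivative_eval_zero_div_factorial]

theorem support_laurentTerm_subset (hQz : ∀ m : ℤ, m < 0 → Qz m = 0) (p : K[X]) :
    support (laurentTerm Qz p) ⊆ Set.range fun mk : ℕ × ℕ => ((mk.1 : ℤ) - mk.2, mk.2) := by
  rintro ⟨n, k⟩ hnk
  have hm : 0 ≤ (k : ℤ) + n := by
    by_contra! h
    simp [laurentTerm, hQz _ h] at hnk
  exact ⟨(((k : ℤ) + n).toNat, k), by simp [Int.toNat_of_nonneg hm]⟩

theorem hasFiniteSupport_laurentTerm [CharZero K] (hQz : ∀ m : ℤ, m < 0 → Qz m = 0) (p : K[X]) :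
    HasFiniteSupport (laurentTerm Qz p) := by
  refine .of_comp_of_support_subset_range (support_laurentTerm_subset hQz p) ?_
  simpa only [comp_def, laurentTerm_natCast_sub] using
    hasFiniteSupport_coeff_smul_X_pow_mul_iterate_derivative (fun m => Qz m) p

theorem finsum_laurentTerm [CharZero K] (hQz : ∀ m : ℤ, m < 0 → Qz m = 0) (p : K[X]) :
    ∑ᶠ q, laurentTerm Qz p q = ∑ m ∈ range (p.natDegree + 1), Qz m * derivative^[m] p := by
  have hg : Injective fun mk : ℕ × ℕ => ((mk.1 : ℤ) - mk.2, mk.2) := by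
    rintro ⟨m, k⟩ ⟨m', k'⟩ h
    simp only [Prod.mk.injEq] at h
    ext <;> omega
  rw [← finsum_comp_of_support_subset_range hg (support_laurentTerm_subset hQz p)]
  simpa only [laurentTerm_natCast_sub] using
    finsum_coeff_smul_X_pow_mul_iterate_derivative (fun m => Qz m) p

end Field

/-- the doubly-infinite (Laurent-type) operator diagonalization
`T = Σ_{n ∈ ℤ} Tₙ Dⁿ` of an arbitrary linear operator on ℝ[x]. -/
theorem stmt_2
    (T : Polynomial ℝ →ₗ[ℝ] Polynomial ℝ) (Q : ℕ → Polynomial ℝ)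
    (hQ : ∀ p : Polynomial ℝ,
      T p = ∑ k ∈ Finset.range (p.natDegree + 1), Q k * (Polynomial.derivative^[k] p))
    (Qz : ℤ → Polynomial ℝ)
    (hQz : ∀ k : ℕ, Qz k = Q k) (hQzneg : ∀ m : ℤ, m < 0 → Qz m = 0)
    (b : ℤ → ℕ → ℝ)
    (hb : ∀ (n : ℤ) (k : ℕ), b n k = ∑ j ∈ Finset.range (k + 1),
      (k.choose j : ℝ) * (Polynomial.derivative^[j] (Qz (j + n))).eval 0)
    (S : ℤ → Polynomial ℝ →ₗ[ℝ] Polynomial ℝ)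
    (hS : ∀ (n : ℤ) (p : Polynomial ℝ), S n p =
      ∑ k ∈ Finset.range (p.natDegree + 1),
        ((Polynomial.derivative^[k] (Qz (k + n))).eval 0 / k.factorial) •
          (Polynomial.X ^ k * Polynomial.derivative^[k] p)) :
    -- (i) each Sₙ is the classical diagonal operator with eigenvalues b n k
    (∀ (n : ℤ) (k : ℕ), S n (Polynomial.X ^ k) = b n k • Polynomial.X ^ k) ∧
    -- (ii) T p is the (finitely supported) doubly-indexed sum Σₙ Σₖ (Q_{k+n}^{(k)}(0)/k!) xᵏ p^{(k+n)}
    (∀ p : Polynomial ℝ,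
      ({q : ℤ × ℕ |
        ((Polynomial.derivative^[q.2] (Qz (q.2 + q.1))).eval 0 / q.2.factorial) •
          (Polynomial.X ^ q.2 * Polynomial.derivative^[((q.2 : ℤ) + q.1).toNat] p) ≠ 0}).Finite ∧
      T p = ∑ᶠ q : ℤ × ℕ,
        ((Polynomial.derivative^[q.2] (Qz (q.2 + q.1))).eval 0 / q.2.factorial) •
          (Polynomial.X ^ q.2 * Polynomial.derivative^[((q.2 : ℤ) + q.1).toNat] p)) ∧
    -- (iii) the family b is uniquely determined by T
    (∀ (Q' : ℕ → Polynomial ℝ) (Qz' : ℤ → Polynomial ℝ) (b' : ℤ → ℕ → ℝ),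
      (∀ p : Polynomial ℝ,
        T p = ∑ k ∈ Finset.range (p.natDegree + 1), Q' k * (Polynomial.derivative^[k] p)) →
      (∀ k : ℕ, Qz' k = Q' k) → (∀ m : ℤ, m < 0 → Qz' m = 0) →
      (∀ (n : ℤ) (k : ℕ), b' n k = ∑ j ∈ Finset.range (k + 1),
        (k.choose j : ℝ) * (Polynomial.derivative^[j] (Qz' (j + n))).eval 0) →
      ∀ (n : ℤ) (k : ℕ), b' n k = b n k) := by
  refine ⟨fun n k => ?_, fun p => ⟨hasFiniteSupport_laurentTerm hQzneg p, ?_⟩, ?_⟩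
  · rw [hS, hb, natDegree_X_pow]
    exact sum_div_factorial_smul_X_pow_mul_iterate_derivative_X_pow _ k
  · show T p = ∑ᶠ q, laurentTerm Qz p q
    rw [hQ p, finsum_laurentTerm hQzneg p]
    simp only [hQz]
  · intro Q' Qz' b' hQ' hQz' hQzneg' hb' n k
    have hQQ' : Q' = Q := eq_of_sum_mul_iterate_derivative_eq fun p => (hQ' p).symm.trans (hQ p)
    have hQzQz' : Qz' = Qz := by
      funext m
      rcases lt_or_ge m 0 with hm | hm
      · rw [hQzneg' m hm, hQzneg m hm]
      · lift m to ℕ using hm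
        rw [hQz', hQz, hQQ']
    rw [hb', hb, hQzQz']
end
end

section
/- Let (γ_n)_{n≥0} be a sequence of real numbers, let T : ℝ[x] → ℝ[x] be the linear operator determined by T[H_n] = γ_n H_n for every n, and let (Q_k)_{k≥0} be the differential coefficients of T. Set g_k*(−1) = Σ_{j=0}^{k} C(k,j) (−1)^{k−j} γ_j. Then for all n, k ∈ ℕ₀: Q_{k+2n+1}^{(k)}(0) = 0 and Q_{k+2n}^{(k)}(0) = ((−1)^n/(n! 2^n)) Σ_{j=0}^{n} C(n,j) · g_{k+n+j}*(−1)/2^{j}. Consequently, with b_{n,m} = Σ_{k=0}^{m} C(m,k) Q_{k+n}^{(k)}(0), one has b_{2n+1,m} = 0 and b_{2n,m} = Σ_{k=0}^{m} C(m,k) ((−1)^n/(n! 2^n)) Σ_{j=0}^{n} C(n,j) g_{k+n+j}*(−1)/2^{j} for all n, m ∈ ℕ₀. -/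
/-!
Let `R p = 2 X p - p'`. Then `R (H m) = H (m + 1)` and `H n' = 2 n H (n - 1)`, and moving the
derivatives to the right gives `R ^ q = ∑ₛ (-1) ^ s C(q, s) H (q - s) Dˢ`. Hence the operator
`H n ↦ C(n, q) H n`, which is `R ^ q D ^ q / (2 ^ q q!)`, has the explicit differential
coefficient `(-1) ^ s C(q, s) / (2 ^ q q!) • H (q - s)` at `D ^ (q + s)`. Newton's formula
`γ n = ∑_q C(n, q) g q` makes `T` the corresponding combination of these operators, and
differential coefficients are unique (`T (H n)` determines `Q n` once `Q 0, …, Q (n - 1)` are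
known). In `Q (k + m)` only the `H (k + 2 j)` can contribute to the coefficient of `X ^ k`, which
vanishes for odd `m` and gives the stated sum for `m = 2 n`; `b` is a binomial combination of
these values.
-/

open Polynomial Finset

noncomputable section

open scoped Nat

namespace Finset

lemma sum_range_sum_antidiagonal {M : Type*} [AddCommMonoid M] (n : ℕ) (f : ℕ → ℕ → M) :
    ∑ k ∈ range (n + 1), ∑ x ∈ antidiagonal k, f x.1 x.2 =
      ∑ i ∈ range (n + 1), ∑ j ∈ range (n - i + 1), f i j := by
  rw [sum_sigma', sum_sigma']
  refine sum_nbij' (fun x => ⟨x.2.1, x.2.2⟩) (fun y => ⟨y.1 + y.2, (y.1, y.2)⟩)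
    ?_ ?_ ?_ (fun _ _ => rfl) (fun _ _ => rfl)
  · rintro ⟨k, i, j⟩ h
    simp only [mem_sigma, mem_range, HasAntidiagonal.mem_antidiagonal] at h ⊢
    omega
  · rintro ⟨i, j⟩ h
    simp only [mem_sigma, mem_range, HasAntidiagonal.mem_antidiagonal, and_true] at h ⊢
    omega
  · rintro ⟨k, i, j⟩ h
    simp only [mem_sigma, HasAntidiagonal.mem_antidiagonal] at h
    simp [h.2]

end Finset

lemma sum_choose_mul_eq_of_eq_sum_alternating {R : Type*} [CommRing R] {γ g : ℕ → R}
    (hg : ∀ k, g k = ∑ j ∈ range (k + 1), (k.choose j : R) * (-1) ^ (k - j) * γ j) (n : ℕ) :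
    ∑ q ∈ range (n + 1), (n.choose q : R) * g q = γ n := by
  have hΔ : g = fun k => (fwdDiff 1)^[k] γ 0 := by
    ext k
    rw [hg, fwdDiff_iter_eq_sum_shift]
    refine sum_congr rfl fun j _ => ?_
    simp only [zsmul_eq_mul, smul_eq_mul, zero_add, Int.cast_mul, Int.cast_pow, Int.cast_neg,
      Int.cast_one, Int.cast_natCast, mul_one]
    ring
  simpa [hΔ] using (shift_eq_sum_fwdDiff_iter 1 γ n 0).symm

namespace Polynomial

lemma eval_zero_iterate_derivative {R : Type*} [CommSemiring R] (p : R[X]) (k : ℕ) :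
    (derivative^[k] p).eval 0 = k ! * p.coeff k := by
  rw [← coeff_zero_eq_eval_zero, coeff_iterate_derivative, zero_add, Nat.descFactorial_self,
    nsmul_eq_mul]

lemma eq_of_sum_mul_iterate_derivative_eq {R : Type*} [CommRing R] [IsDomain R]
    {p : ℕ → R[X]} (hp : ∀ n, derivative^[n] (p n) ≠ 0) {Q Q' : ℕ → R[X]}
    (h : ∀ n, ∑ k ∈ range (n + 1), Q k * derivative^[k] (p n) =
      ∑ k ∈ range (n + 1), Q' k * derivative^[k] (p n)) : Q = Q' := by
  funext n
  induction n using Nat.strong_induction_on with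
  | _ n ih =>
    have hn := h n
    rw [sum_range_succ, sum_range_succ,
      sum_congr rfl fun k hk => by rw [ih k (mem_range.mp hk)]] at hn
    exact mul_right_cancel₀ (hp n) (add_left_cancel hn)

end Polynomial

lemma coeff_hermitePoly_add_two_mul (m s : ℕ) :
    (hermitePoly (m + 2 * s)).coeff m = (-1) ^ s * (m + 2 * s)! * 2 ^ m / (s ! * m !) := by
  rw [hermitePoly, finsetSum_coeff, sum_eq_single s]
  · simp
  · intro k hk hks
    rw [coeff_C_mul_X_pow, if_neg]
    have := mem_range.mp hk
    omega
  · intro hs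
    exact absurd (mem_range.mpr (by omega)) hs

lemma coeff_hermitePoly_self (n : ℕ) : (hermitePoly n).coeff n = 2 ^ n := by
  have := coeff_hermitePoly_add_two_mul n 0
  simp_all [Nat.factorial_ne_zero]

lemma coeff_hermitePoly_eq_zero {n m : ℕ} (h : ∀ s, n ≠ m + 2 * s) :
    (hermitePoly n).coeff m = 0 := by
  rw [hermitePoly, finsetSum_coeff]
  refine sum_eq_zero fun k hk => ?_
  rw [coeff_C_mul_X_pow, if_neg]
  have := mem_range.mp hk
  have := h k
  omega

lemma hermitePoly_zero : hermitePoly 0 = 1 := by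
  simp [hermitePoly]

lemma hermitePoly_succ (n : ℕ) :
    hermitePoly (n + 1) = 2 * X * hermitePoly n - derivative (hermitePoly n) := by
  ext e
  rw [coeff_sub, mul_assoc, coeff_ofNat_mul, coeff_derivative]
  by_cases hpar : ∃ s, n + 1 = e + 2 * s
  · obtain ⟨s, hs⟩ := hpar
    rw [hs, coeff_hermitePoly_add_two_mul]
    rcases e with _ | d <;> rcases s with _ | s
    · omega
    · rw [coeff_X_mul_zero, show n = 1 + 2 * s by omega, coeff_hermitePoly_add_two_mul,
        show 0 + 2 * (s + 1) = 1 + 2 * s + 1 by ring]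
      simp only [Nat.factorial_succ]
      push_cast
      field_simp
      ring
    · rw [coeff_X_mul, show n = d by omega, coeff_hermitePoly_self,
        coeff_hermitePoly_eq_zero (m := d + 1 + 1) (fun _ => by omega)]
      simp only [pow_zero, mul_zero, add_zero, Nat.factorial_zero, Nat.cast_one, one_mul, zero_mul,
        sub_zero, pow_succ]
      field_simp
    · rw [coeff_X_mul, show n = d + 2 * (s + 1) by omega, coeff_hermitePoly_add_two_mul,
        show d + 2 * (s + 1) = d + 1 + 1 + 2 * s by ring, coeff_hermitePoly_add_two_mul,
        show d + 1 + 2 * (s + 1) = d + 1 + 1 + 2 * s + 1 by ring]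
      simp only [Nat.factorial_succ]
      push_cast
      field_simp
      ring
  · push Not at hpar
    rw [coeff_hermitePoly_eq_zero hpar,
      coeff_hermitePoly_eq_zero (m := e + 1) (fun s => by have := hpar (s + 1); omega)]
    rcases e with _ | d
    · simp
    · rw [coeff_X_mul, coeff_hermitePoly_eq_zero (fun s => by have := hpar s; omega)]
      simp

lemma derivative_hermitePoly_succ (n : ℕ) :
    derivative (hermitePoly (n + 1)) = (2 * (n + 1) : ℝ) • hermitePoly n := by
  induction n with
  | zero => simp [hermitePoly_succ, hermitePoly_zero, smul_eq_C_mul, map_ofNat]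
  | succ n ih =>
    rw [hermitePoly_succ (n + 1), derivative_sub, derivative_mul, ih, derivative_smul,
      hermitePoly_succ n]
    simp only [smul_eq_C_mul, derivative_mul, derivative_ofNat, derivative_X, map_mul, map_add,
      map_natCast, map_ofNat, map_one]
    push_cast
    ring

lemma iterate_derivative_hermitePoly (n k : ℕ) :
    derivative^[k] (hermitePoly n) = (2 ^ k * n.descFactorial k : ℝ) • hermitePoly (n - k) := by
  induction k with
  | zero => simp
  | succ k ih =>
    rw [Function.iterate_succ_apply', ih, derivative_smul, Nat.descFactorial_succ]
    obtain h | ⟨m, hm⟩ : n - k = 0 ∨ ∃ m, n - k = m + 1 := by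
      rcases n - k with _ | m <;> simp
    · simp [h, hermitePoly_zero]
    · rw [hm, derivative_hermitePoly_succ, smul_smul, show n - (k + 1) = m by omega]
      push_cast [hm]
      ring_nf

lemma natDegree_hermitePoly (n : ℕ) : (hermitePoly n).natDegree = n :=
  natDegree_eq_of_le_of_coeff_ne_zero
    (natDegree_le_iff_coeff_eq_zero.mpr fun m hm =>
      coeff_hermitePoly_eq_zero fun s => by omega)
    (by simp [coeff_hermitePoly_self])

lemma iterate_derivative_hermitePoly_self_ne_zero (n : ℕ) :
    derivative^[n] (hermitePoly n) ≠ 0 := by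
  rw [iterate_derivative_hermitePoly, Nat.sub_self, hermitePoly_zero, Nat.descFactorial_self]
  simp [Nat.factorial_ne_zero]

def hermiteRaise : ℝ[X] →ₗ[ℝ] ℝ[X] := LinearMap.mulLeft ℝ (2 * X) - derivative

lemma hermiteRaise_apply (p : ℝ[X]) : hermiteRaise p = 2 * X * p - derivative p := rfl

lemma hermiteRaise_mul (f p : ℝ[X]) :
    hermiteRaise (f * p) = hermiteRaise f * p - f * derivative p := by
  simp only [hermiteRaise_apply, derivative_mul]
  ring

lemma iterate_hermiteRaise_hermitePoly (q m : ℕ) :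
    hermiteRaise^[q] (hermitePoly m) = hermitePoly (m + q) := by
  induction q with
  | zero => rfl
  | succ q ih => rw [Function.iterate_succ_apply', ih, hermiteRaise_apply, ← hermitePoly_succ]; rfl

lemma iterate_hermiteRaise (q : ℕ) (p : ℝ[X]) :
    hermiteRaise^[q] p = ∑ s ∈ range (q + 1),
      ((-1) ^ s * q.choose s : ℝ) • (hermitePoly (q - s) * derivative^[s] p) := by
  induction q with
  | zero => simp [hermitePoly_zero]
  | succ q ih =>
    set u : ℕ → ℝ[X] := fun s => hermitePoly (q + 1 - s) * derivative^[s] p with hu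
    have hraise : hermiteRaise^[q + 1] p =
        ∑ s ∈ range (q + 1), ((-1) ^ s * q.choose s : ℝ) • (u s - u (s + 1)) := by
      rw [Function.iterate_succ_apply', ih, map_sum]
      refine sum_congr rfl fun s hs => ?_
      have hsq : q - s + 1 = q + 1 - s := by have := mem_range.mp hs; omega
      rw [map_smul, hermiteRaise_mul, hermiteRaise_apply, ← hermitePoly_succ, hsq,
        ← Function.iterate_succ_apply' derivative]
      simp [hu]
    have hshift : ∑ s ∈ range (q + 1), ((-1) ^ s * q.choose s : ℝ) • u s =
        ∑ s ∈ range (q + 1), ((-1) ^ (s + 1) * q.choose (s + 1) : ℝ) • u (s + 1) + u 0 := by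
      rw [sum_range_succ', sum_range_succ (fun s => ((-1) ^ (s + 1) * q.choose (s + 1) : ℝ) • _)]
      simp
    change _ = ∑ s ∈ range (q + 1 + 1), ((-1) ^ s * (q + 1).choose s : ℝ) • u s
    rw [hraise, sum_range_succ' (fun s => ((-1) ^ s * (q + 1).choose s : ℝ) • u s)]
    simp only [smul_sub, sum_sub_distrib, hshift, Nat.choose_succ_succ', Nat.cast_add, mul_add,
      add_smul, sum_add_distrib, pow_succ]
    simp only [mul_neg, mul_one, neg_mul, neg_smul, sum_neg_distrib, pow_zero,
      Nat.choose_zero_right, Nat.cast_one, one_smul]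
    abel

lemma sum_hermitePoly_mul_iterate_derivative_hermitePoly (q m : ℕ) :
    ∑ s ∈ range (m + 1), ((-1) ^ s * q.choose s : ℝ) •
      (hermitePoly (q - s) * derivative^[s] (hermitePoly m)) = hermitePoly (m + q) := by
  rw [← iterate_hermiteRaise_hermitePoly, iterate_hermiteRaise]
  have hm : range (m + 1) ⊆ range (m + q + 1) := range_subset_range.mpr (by omega)
  have hq : range (q + 1) ⊆ range (m + q + 1) := range_subset_range.mpr (by omega)
  rw [sum_subset hm, sum_subset hq]
  · intro s _ hs
    rw [Nat.choose_eq_zero_of_lt (by simpa using hs)]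
    simp
  · intro s _ hs
    rw [iterate_derivative_eq_zero (by rw [natDegree_hermitePoly]; simpa using hs)]
    simp

/-- The summand `x = (q, s)` is `g q` times the coefficient of `D ^ (q + s)` in
`hermiteRaise ^ q ∘ D ^ q / (2 ^ q q!)`, the operator `H n ↦ C(n, q) H n`. -/
def hermiteDiffCoeff (g : ℕ → ℝ) (k : ℕ) : ℝ[X] :=
  ∑ x ∈ antidiagonal k,
    (g x.1 * (-1) ^ x.2 * x.1.choose x.2 / (2 ^ x.1 * x.1 !)) • hermitePoly (x.1 - x.2)

lemma sum_hermiteDiffCoeff_mul_iterate_derivative (g : ℕ → ℝ) (n : ℕ) :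
    ∑ k ∈ range (n + 1), hermiteDiffCoeff g k * derivative^[k] (hermitePoly n) =
      (∑ q ∈ range (n + 1), (n.choose q : ℝ) * g q) • hermitePoly n := by
  set F : ℕ → ℕ → ℝ[X] := fun q s => (g q * (-1) ^ s * q.choose s / (2 ^ q * q !)) •
    (hermitePoly (q - s) * derivative^[s + q] (hermitePoly n))
  have hF : ∀ k, hermiteDiffCoeff g k * derivative^[k] (hermitePoly n) =
      ∑ x ∈ antidiagonal k, F x.1 x.2 := by
    intro k
    rw [hermiteDiffCoeff, sum_mul]
    refine sum_congr rfl fun x hx => ?_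
    obtain rfl := HasAntidiagonal.mem_antidiagonal.mp hx
    rw [smul_mul_assoc, add_comm]
  simp only [hF, sum_range_sum_antidiagonal n F, sum_smul]
  refine sum_congr rfl fun q hq => ?_
  have hqn : q ≤ n := Nat.lt_succ_iff.mp (mem_range.mp hq)
  have hFq : ∀ s, F q s = ((n.choose q : ℝ) * g q) • ((-1) ^ s * q.choose s : ℝ) •
      (hermitePoly (q - s) * derivative^[s] (hermitePoly (n - q))) := by
    intro s
    simp only [F, Function.iterate_add_apply, iterate_derivative_hermitePoly n q,
      iterate_derivative_smul, mul_smul_comm, smul_smul, Nat.descFactorial_eq_factorial_mul_choose]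
    congr 1
    push_cast
    field_simp
  simp only [hFq]
  rw [← smul_sum, sum_hermitePoly_mul_iterate_derivative_hermitePoly, Nat.sub_add_cancel hqn]

lemma coeff_hermiteDiffCoeff_add_two_mul_add_one (g : ℕ → ℝ) (k n : ℕ) :
    (hermiteDiffCoeff g (k + 2 * n + 1)).coeff k = 0 := by
  rw [hermiteDiffCoeff, finsetSum_coeff]
  refine sum_eq_zero fun x hx => ?_
  have hx' := HasAntidiagonal.mem_antidiagonal.mp hx
  rw [coeff_smul, smul_eq_mul]
  rcases le_or_gt x.2 x.1 with h | h
  · rw [coeff_hermitePoly_eq_zero fun s => by omega, mul_zero]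
  · rw [Nat.choose_eq_zero_of_lt h]
    simp

lemma coeff_hermiteDiffCoeff_add_two_mul (g : ℕ → ℝ) (k n : ℕ) :
    k ! * (hermiteDiffCoeff g (k + 2 * n)).coeff k = (-1) ^ n / (n ! * 2 ^ n) *
      ∑ j ∈ range (n + 1), (n.choose j : ℝ) * g (k + n + j) / 2 ^ j := by
  rw [hermiteDiffCoeff, finsetSum_coeff, Nat.sum_antidiagonal_eq_sum_range_succ_mk]
  dsimp only
  rw [Nat.succ_eq_add_one, show k + 2 * n + 1 = k + n + (n + 1) by ring, sum_range_add]
  simp only [mul_add, mul_sum]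
  have hlow : ∀ i ∈ range (k + n), (k ! : ℝ) *
      ((g i * (-1) ^ (k + 2 * n - i) * i.choose (k + 2 * n - i) / (2 ^ i * i !)) •
        hermitePoly (i - (k + 2 * n - i))).coeff k = 0 := by
    intro i hi
    have := mem_range.mp hi
    rw [coeff_smul, smul_eq_mul]
    rcases le_or_gt (k + 2 * n - i) i with h | h
    · rw [coeff_hermitePoly_eq_zero fun s => by omega, mul_zero, mul_zero]
    · rw [Nat.choose_eq_zero_of_lt h]
      simp
  rw [sum_eq_zero hlow, zero_add]
  refine sum_congr rfl fun j hj => ?_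
  obtain ⟨t, rfl⟩ := Nat.exists_eq_add_of_le (Nat.lt_succ_iff.mp (mem_range.mp hj))
  rw [coeff_smul, smul_eq_mul, show k + 2 * (j + t) - (k + (j + t) + j) = t by omega,
    show k + (j + t) + j - t = k + 2 * j by omega, coeff_hermitePoly_add_two_mul,
    show k + (j + t) + j = k + 2 * j + t by ring, Nat.cast_choose ℝ (Nat.le_add_left t _),
    Nat.cast_choose ℝ (Nat.le_add_right j t), Nat.add_sub_cancel, Nat.add_sub_cancel_left]
  field_simp
  ring

/-- values of the derivatives at 0 of the differential coefficients of a
Hermite diagonal differential operator, and the resulting eigenvalue families b. -/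
theorem stmt_5 (γ : ℕ → ℝ)
    (T : Polynomial ℝ →ₗ[ℝ] Polynomial ℝ)
    (hT : ∀ n, T (hermitePoly n) = γ n • hermitePoly n)
    (Q : ℕ → Polynomial ℝ)
    (hQ : ∀ p : Polynomial ℝ,
      T p = ∑ k ∈ Finset.range (p.natDegree + 1), Q k * (Polynomial.derivative^[k] p))
    (g : ℕ → ℝ)
    (hg : ∀ k, g k = ∑ j ∈ Finset.range (k + 1), (k.choose j : ℝ) * (-1) ^ (k - j) * γ j)
    (b : ℕ → ℕ → ℝ)
    (hb : ∀ n m, b n m = ∑ k ∈ Finset.range (m + 1),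
      (m.choose k : ℝ) * (Polynomial.derivative^[k] (Q (k + n))).eval 0) :
    (∀ n k : ℕ,
      (Polynomial.derivative^[k] (Q (k + 2 * n + 1))).eval 0 = 0 ∧
      (Polynomial.derivative^[k] (Q (k + 2 * n))).eval 0 =
        ((-1) ^ n / (n.factorial * 2 ^ n)) *
          ∑ j ∈ Finset.range (n + 1), (n.choose j : ℝ) * g (k + n + j) / 2 ^ j) ∧
    (∀ n m : ℕ,
      b (2 * n + 1) m = 0 ∧
      b (2 * n) m = ∑ k ∈ Finset.range (m + 1), (m.choose k : ℝ) *
        (((-1) ^ n / (n.factorial * 2 ^ n)) *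
          ∑ j ∈ Finset.range (n + 1), (n.choose j : ℝ) * g (k + n + j) / 2 ^ j)) := by
  obtain rfl : Q = hermiteDiffCoeff g := by
    refine eq_of_sum_mul_iterate_derivative_eq iterate_derivative_hermitePoly_self_ne_zero
      fun n => ?_
    have h := hQ (hermitePoly n)
    rw [natDegree_hermitePoly, hT] at h
    rw [← h, sum_hermiteDiffCoeff_mul_iterate_derivative,
      sum_choose_mul_eq_of_eq_sum_alternating hg]
  have hodd : ∀ n k, (derivative^[k] (hermiteDiffCoeff g (k + 2 * n + 1))).eval 0 = 0 :=
    fun n k => by rw [eval_zero_iterate_derivative, coeff_hermiteDiffCoeff_add_two_mul_add_one,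
      mul_zero]
  have heven : ∀ n k, (derivative^[k] (hermiteDiffCoeff g (k + 2 * n))).eval 0 =
      (-1) ^ n / (n ! * 2 ^ n) * ∑ j ∈ range (n + 1), (n.choose j : ℝ) * g (k + n + j) / 2 ^ j :=
    fun n k => by rw [eval_zero_iterate_derivative, coeff_hermiteDiffCoeff_add_two_mul]
  refine ⟨fun n k => ⟨hodd n k, heven n k⟩, fun n m => ⟨?_, ?_⟩⟩
  · rw [hb]
    exact sum_eq_zero fun k _ => by rw [← add_assoc, hodd, mul_zero]
  · rw [hb]
    exact sum_congr rfl fun k _ => by rw [heven]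
end
end

section
/- Let n, m, p be nonnegative integers, and adopt the convention that a binomial coefficient C(a,b) equals 0 whenever a < 0, b < 0, or b > a. Then Σ_{k=0}^{n} Σ_{j=0}^{m} C(m,j) C(k−j, p−j) C(p, k−j) C(n+1, k+m−j) = C(n+1, p) C(n+1, m) − C(n+1−m, p−m) C(p, n+1−m). -/
/-!
Add the row `k = n + 1` to the double sum: only `j = m` survives there, and it is exactly the
subtracted term. Write `N = n + 1`. In the full double sum substitute `l = k - j`; Vandermonde's
identity in `j` turns `C(m,j) C(l,p-j)` into `C(l+m,p)`, trinomial revision rewrites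
`C(N,l+m) C(l+m,p)` as `C(N,p) C(N-p,l+m-p)`, and a second Vandermonde sums
`C(p,l) C(N-p,l+m-p)` over `l` to `C(N,m)`.
-/

open Finset

noncomputable section

/-- Binomial coefficient on integers, with the convention that `C(a,b) = 0` whenever
`a < 0`, `b < 0`, or `b > a`. -/
def ichoose (a b : ℤ) : ℤ :=
  if 0 ≤ a ∧ 0 ≤ b ∧ b ≤ a then (a.toNat.choose b.toNat : ℤ) else 0

lemma ichoose_eq_zero {a b : ℤ} (h : ¬(0 ≤ a ∧ 0 ≤ b ∧ b ≤ a)) : ichoose a b = 0 :=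
  if_neg h

lemma ichoose_of_nonneg {a b : ℤ} (ha : 0 ≤ a) (hb : 0 ≤ b) :
    ichoose a b = a.toNat.choose b.toNat := by
  by_cases h : b ≤ a
  · exact if_pos ⟨ha, hb, h⟩
  · rw [ichoose_eq_zero (by tauto), Nat.choose_eq_zero_of_lt (by omega), Nat.cast_zero]

lemma ichoose_natCast (a b : ℕ) : ichoose a b = a.choose b := by
  simp [ichoose_of_nonneg]

lemma ichoose_self {a : ℤ} (h : 0 ≤ a) : ichoose a a = 1 := by
  rw [ichoose_of_nonneg h h, Nat.choose_self, Nat.cast_one]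

lemma ichoose_symm {a : ℤ} (ha : 0 ≤ a) (b : ℤ) : ichoose a b = ichoose a (a - b) := by
  by_cases h : 0 ≤ b ∧ b ≤ a
  · rw [ichoose_of_nonneg ha h.1, ichoose_of_nonneg ha (by omega),
      show (a - b).toNat = a.toNat - b.toNat by omega, Nat.choose_symm (by omega)]
  · rw [ichoose_eq_zero (by omega), ichoose_eq_zero (by omega)]

lemma ichoose_mul_ichoose {N a b : ℤ} (hN : 0 ≤ N) :
    ichoose N a * ichoose a b = ichoose N b * ichoose (N - b) (a - b) := by
  by_cases h : 0 ≤ b ∧ b ≤ a ∧ a ≤ N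
  · obtain ⟨hb, hba, haN⟩ := h
    rw [ichoose_of_nonneg hN (by omega), ichoose_of_nonneg (by omega) hb,
      ichoose_of_nonneg hN hb, ichoose_of_nonneg (by omega) (by omega),
      show (N - b).toNat = N.toNat - b.toNat by omega,
      show (a - b).toNat = a.toNat - b.toNat by omega,
      ← Nat.cast_mul, ← Nat.cast_mul, Nat.choose_mul (by omega)]
  · by_cases hb : 0 ≤ b ∧ b ≤ a
    · rw [ichoose_eq_zero (a := N) (b := a) (by omega),
        ichoose_eq_zero (a := N - b) (b := a - b) (by omega), zero_mul, mul_zero]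
    · rw [ichoose_eq_zero (a := a) (b := b) (by omega), mul_zero]
      by_cases hb' : 0 ≤ b
      · rw [ichoose_eq_zero (a := N - b) (b := a - b) (by omega), mul_zero]
      · rw [ichoose_eq_zero (a := N) (b := b) (by omega), zero_mul]

lemma sum_range_comp_sub {M : Type*} [AddCommMonoid M] (f : ℤ → M) (j N : ℕ)
    (h_neg : ∀ l < 0, f l = 0) (h_large : ∀ l, (N : ℤ) < l + j → f l = 0) :
    ∑ k ∈ range (N + 1), f (k - j) = ∑ l ∈ range (N + 1), f l := by
  have hj {k : ℕ} (hk : f (k - j) ≠ 0) : j ≤ k := by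
    by_contra h
    exact hk (h_neg _ (by omega))
  refine sum_bij_ne_zero (fun k _ _ => k - j) (fun k hk _ => ?_) (fun k₁ _ h₁ k₂ _ h₂ h => ?_)
    (fun l _ hfl => ⟨l + j, ?_, ?_, ?_⟩) (fun k _ hk => ?_)
  · simp only [mem_range] at hk ⊢; omega
  · have := hj h₁; have := hj h₂; omega
  · simp only [mem_range]
    by_contra h
    exact hfl (h_large _ (by omega))
  · simpa
  · simp
  · rw [Nat.cast_sub (hj hk)]

lemma sum_range_ichoose_mul_ichoose_sub (a b n : ℕ) (c : ℤ) (ha : a < n) :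
    ∑ t ∈ range n, ichoose a t * ichoose b (c - t) = ichoose (a + b) c := by
  rcases lt_or_ge c 0 with hc | hc
  · rw [ichoose_eq_zero (by omega)]
    exact sum_eq_zero fun t _ => by rw [ichoose_eq_zero (a := b) (by omega), mul_zero]
  lift c to ℕ using hc
  have h_cast {t : ℕ} (ht : t ≤ c) :
      ichoose a t * ichoose b (c - t) = ((a.choose t * b.choose (c - t) : ℕ) : ℤ) := by
    rw [← Nat.cast_sub ht, ichoose_natCast, ichoose_natCast, Nat.cast_mul]
  have h_le {t : ℕ} (h : ichoose a t * ichoose b (c - t) ≠ 0) : t ≤ c := by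
    by_contra hlt
    exact h (by rw [ichoose_eq_zero (a := b) (by omega), mul_zero])
  rw [← Nat.cast_add, ichoose_natCast, Nat.add_choose_eq, Nat.cast_sum]
  refine sum_bij_ne_zero (fun t _ _ => (t, c - t)) (fun t _ h => ?_) (fun _ _ _ _ _ _ h => ?_)
    (fun x hx hne => ⟨x.1, ?_, ?_, ?_⟩) (fun t _ h => h_cast (h_le h))
  · have := h_le h
    rw [HasAntidiagonal.mem_antidiagonal]; omega
  · exact (Prod.ext_iff.1 h).1
  · rw [HasAntidiagonal.mem_antidiagonal] at hx
    have : x.1 ≤ a := by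
      by_contra hlt
      exact hne (by rw [Nat.choose_eq_zero_of_lt (by omega), zero_mul, Nat.cast_zero])
    rw [mem_range]; omega
  · rw [HasAntidiagonal.mem_antidiagonal] at hx
    rwa [h_cast (by omega), show c - x.1 = x.2 by omega]
  · rw [HasAntidiagonal.mem_antidiagonal] at hx
    ext <;> dsimp only; omega

lemma sum_range_ichoose_mul_ichoose_add_sub (N m p : ℕ) (hp : p ≤ N) :
    ∑ l ∈ range (N + 1), ichoose p l * ichoose (N - p) (l + m - p) = ichoose N m := by
  calc ∑ l ∈ range (N + 1), ichoose p l * ichoose (N - p) (l + m - p)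
      = ∑ l ∈ range (N + 1), ichoose p l * ichoose (N - p : ℕ) (N - m - l) := by
        refine sum_congr rfl fun l _ => ?_
        rw [Nat.cast_sub hp, ichoose_symm (a := N - p) (by omega)]
        ring_nf
    _ = ichoose (p + (N - p : ℕ)) (N - m) :=
        sum_range_ichoose_mul_ichoose_sub p (N - p) (N + 1) (N - m) (by omega)
    _ = ichoose N m := by
        rw [Nat.cast_sub hp, add_sub_cancel, ← ichoose_symm (Nat.cast_nonneg N)]

lemma sum_sum_ichoose_mul_eq_ichoose_mul_ichoose (N m p : ℕ) :
    ∑ k ∈ range (N + 1), ∑ j ∈ range (m + 1),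
      ichoose m j * ichoose (k - j) (p - j) * ichoose p (k - j) * ichoose N (k + m - j) =
    ichoose N p * ichoose N m := by
  have h_shift (j : ℕ) (hj : j ≤ m) : ∑ k ∈ range (N + 1),
      ichoose m j * ichoose (k - j) (p - j) * ichoose p (k - j) * ichoose N (k + m - j) =
      ∑ l ∈ range (N + 1), ichoose m j * ichoose l (p - j) * ichoose p l * ichoose N (l + m) := by
    simpa only [sub_add_eq_add_sub] using sum_range_comp_sub
      (fun l => ichoose m j * ichoose l (p - j) * ichoose p l * ichoose N (l + m)) j N
      (fun l hl => by rw [ichoose_eq_zero (a := p) (b := l) (by omega)]; ring)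
      (fun l hl => by rw [ichoose_eq_zero (a := N) (by omega), mul_zero])
  have h_vandermonde (l : ℕ) : ∑ j ∈ range (m + 1),
      ichoose m j * ichoose l (p - j) * ichoose p l * ichoose N (l + m) =
      ichoose N p * (ichoose p l * ichoose (N - p) (l + m - p)) := by
    rw [← sum_mul, ← sum_mul, sum_range_ichoose_mul_ichoose_sub m l (m + 1) p (by omega),
      add_comm (m : ℤ)]
    linear_combination ichoose p l * ichoose_mul_ichoose (N := N) (a := l + m) (b := p) (by omega)
  calc _ = ∑ j ∈ range (m + 1), ∑ k ∈ range (N + 1),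
        ichoose m j * ichoose (k - j) (p - j) * ichoose p (k - j) * ichoose N (k + m - j) :=
        sum_comm
    _ = ∑ l ∈ range (N + 1), ∑ j ∈ range (m + 1),
        ichoose m j * ichoose l (p - j) * ichoose p l * ichoose N (l + m) := by
        rw [sum_congr rfl fun j hj => h_shift j (by rw [mem_range] at hj; omega), sum_comm]
    _ = ichoose N p * ichoose N m := by
        rw [sum_congr rfl fun l _ => h_vandermonde l, ← mul_sum]
        by_cases hp : p ≤ N
        · rw [sum_range_ichoose_mul_ichoose_add_sub N m p hp]
        · rw [ichoose_eq_zero (a := N) (b := p) (by omega), zero_mul, zero_mul]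

lemma sum_ichoose_mul_top_row (N m p : ℕ) :
    ∑ j ∈ range (m + 1),
      ichoose m j * ichoose (N - j) (p - j) * ichoose p (N - j) * ichoose N (N + m - j) =
    ichoose (N - m) (p - m) * ichoose p (N - m) := by
  rw [sum_eq_single_of_mem m (self_mem_range_succ m) fun j hj hjm => by
    rw [mem_range] at hj
    rw [ichoose_eq_zero (a := N) (by omega), mul_zero]]
  rw [ichoose_self (Nat.cast_nonneg m), add_sub_cancel_right, ichoose_self (Nat.cast_nonneg N)]
  ring

/-- the combinatorial identity of Lemma 4.2. -/
theorem stmt_15 (n m p : ℕ) :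
    ∑ k ∈ Finset.range (n + 1), ∑ j ∈ Finset.range (m + 1),
      ichoose (m : ℤ) (j : ℤ) * ichoose ((k : ℤ) - (j : ℤ)) ((p : ℤ) - (j : ℤ)) *
        ichoose (p : ℤ) ((k : ℤ) - (j : ℤ)) *
        ichoose ((n : ℤ) + 1) ((k : ℤ) + (m : ℤ) - (j : ℤ)) =
    ichoose ((n : ℤ) + 1) (p : ℤ) * ichoose ((n : ℤ) + 1) (m : ℤ) -
      ichoose ((n : ℤ) + 1 - (m : ℤ)) ((p : ℤ) - (m : ℤ)) *
        ichoose (p : ℤ) ((n : ℤ) + 1 - (m : ℤ)) := by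
  have h := sum_sum_ichoose_mul_eq_ichoose_mul_ichoose (n + 1) m p
  rw [sum_range_succ, sum_ichoose_mul_top_row] at h
  push_cast at h
  exact eq_sub_of_add_eq h
end
end

section
/- Let (γ_n)_{n≥0} be a sequence of real numbers, let T : ℝ[x] → ℝ[x] be the linear operator determined by T[L_n] = γ_n L_n for every n, let (Q_k)_{k≥0} be the differential coefficients of T, and set g_k*(−1) = Σ_{j=0}^{k} C(k,j) (−1)^{k−j} γ_j. Then for all n, k ∈ ℕ₀: Q_{k+n}^{(k)}(0) = ((−1)^n/n!) Σ_{j=0}^{n} C(n,j) · ((k+j)!/((k+j)−n)!) · g_{k+j}*(−1), where the factor (k+j)!/((k+j)−n)! is interpreted as 0 when k+j < n. Consequently, with b_{n,m} = Σ_{k=0}^{m} C(m,k) Q_{k+n}^{(k)}(0), one has b_{n,m} = Σ_{k=0}^{m} C(m,k) ((−1)^n/n!) Σ_{j=0}^{n} C(n,j) ((k+j)!/((k+j)−n)!) g_{k+j}*(−1) for all n, m ∈ ℕ₀. -/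
open Polynomial Finset

noncomputable section

/-! Write `A t = Q_{t+n}^{(t)}(0)` and `Δ` for the forward difference, so that `g k = Δ^k γ 0`.
Reading off the coefficient of `x^r` in `T[x^(n+r)]` once through the differential coefficients and
once through the expansion `x^m = (-1)^m m! ∑ (-1)^(m-j) C(m,j) L_j` gives the binomial transform
`∑_t C(r,t) A t = (-1)^n C(r+n,n) Δ^n γ r`. By Vandermonde's identity and the Gregory–Newton
formula the claimed values of `A t` have the same binomial transform, which is injective. -/

open fwdDiff

section Combinatorics

variable {R : Type*} [CommRing R]

theorem fwdDiff_iter_eq_sum_choose_mul (f : ℕ → R) (n y : ℕ) :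
    Δ_[1] ^[n] f y = ∑ k ∈ range (n + 1), (-1) ^ (n - k) * (n.choose k : R) * f (y + k) := by
  simp [fwdDiff_iter_eq_sum_shift, zsmul_eq_mul]

theorem sum_neg_one_pow_mul_choose_mul_choose (m i : ℕ) :
    ∑ j ∈ range (m + 1), (-1 : R) ^ (m - j) * (m.choose j : R) * (j.choose i : R) =
      if m = i then 1 else 0 := by
  have h := congrArg (Int.cast : ℤ → R) (fwdDiff_iter_choose_zero i m)
  rw [fwdDiff_iter_eq_sum_choose_mul] at h
  push_cast at h
  simpa using h

theorem sum_choose_mul_choose_mul (f : ℕ → R) (a b : ℕ) :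
    ∑ i ∈ range (a + b + 1), ((a + b).choose i : R) * (i.choose b : R) * f i =
      ((a + b).choose b : R) * ∑ s ∈ range (a + 1), (a.choose s : R) * f (b + s) := by
  rw [show a + b + 1 = b + (a + 1) by omega, sum_range_add, mul_sum]
  have hlow : ∀ i ∈ range b, ((a + b).choose i : R) * (i.choose b : R) * f i = 0 := by
    intro i hi
    rw [Nat.choose_eq_zero_of_lt (mem_range.1 hi)]
    simp
  rw [sum_eq_zero hlow, zero_add]
  refine sum_congr rfl fun s _ => ?_
  have h := Nat.choose_mul (n := a + b) (k := b + s) (s := b) (by omega)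
  rw [show a + b - b = a by omega, show b + s - b = s by omega] at h
  rw [← mul_assoc, ← Nat.cast_mul, h, Nat.cast_mul]

theorem sum_choose_mul_sum_choose_mul_add (h : ℕ → R) (r n : ℕ) :
    ∑ t ∈ range (r + 1), (r.choose t : R) * ∑ j ∈ range (n + 1), (n.choose j : R) * h (t + j) =
      ∑ i ∈ range (r + n + 1), ((r + n).choose i : R) * h i := by
  simp_rw [mul_sum, ← mul_assoc]
  rw [← sum_product', ← sum_fiberwise_of_maps_to (g := fun p : ℕ × ℕ => p.1 + p.2)
    (t := range (r + n + 1)) (fun p hp => by simp only [mem_product, mem_range] at hp ⊢; omega)]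
  refine sum_congr rfl fun i _ => ?_
  rw [Nat.add_choose_eq, Nat.cast_sum, sum_mul]
  refine sum_subset (fun p hp => by simp_all [mem_filter]) (fun p hp hp' => ?_) |>.trans
    (sum_congr rfl fun p hp => ?_)
  · simp only [mem_filter, mem_product, mem_range, not_and_or, not_lt] at hp'
    rcases hp' with (hr | hn) | hne
    · rw [Nat.choose_eq_zero_of_lt (by omega : r < p.1)]; simp
    · rw [Nat.choose_eq_zero_of_lt (by omega : n < p.2)]; simp
    · exact absurd (mem_antidiagonal.1 hp) hne
  · rw [mem_antidiagonal.1 hp, Nat.cast_mul]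

theorem eq_of_sum_range_choose_smul_eq {M : Type*} [AddCancelCommMonoid M] {a b : ℕ → M}
    (h : ∀ r, ∑ t ∈ range (r + 1), r.choose t • a t = ∑ t ∈ range (r + 1), r.choose t • b t) :
    a = b := by
  funext r
  induction r using Nat.strong_induction_on with
  | _ r ih =>
    have hr := h r
    rw [sum_range_succ, sum_range_succ, sum_congr rfl fun t ht => by rw [ih t (mem_range.1 ht)],
      Nat.choose_self, one_smul, one_smul] at hr
    exact add_left_cancel hr

theorem sum_choose_mul_sum_choose_mul_descFactorial_fwdDiff {K : Type*} [Field K] [CharZero K]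
    (γ : ℕ → K) (n r : ℕ) :
    ∑ t ∈ range (r + 1), (r.choose t : K) * ((-1) ^ n / n.factorial *
      ∑ j ∈ range (n + 1), (n.choose j : K) * ((t + j).descFactorial n : K) * Δ_[1] ^[t + j] γ 0) =
      (-1) ^ n * ((r + n).choose n : K) * Δ_[1] ^[n] γ r := by
  have hterm : ∀ t, (-1) ^ n / n.factorial *
      ∑ j ∈ range (n + 1), (n.choose j : K) * ((t + j).descFactorial n : K) * Δ_[1] ^[t + j] γ 0 =
      (-1) ^ n * ∑ j ∈ range (n + 1), (n.choose j : K) *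
        (((t + j).choose n : K) * Δ_[1] ^[t + j] γ 0) := by
    intro t
    have hfac : (n.factorial : K) ≠ 0 := Nat.cast_ne_zero.2 n.factorial_ne_zero
    simp_rw [Nat.descFactorial_eq_factorial_mul_choose, Nat.cast_mul, mul_sum]
    refine sum_congr rfl fun j _ => ?_
    field_simp
  have hshift : ∑ s ∈ range (r + 1), (r.choose s : K) * Δ_[1] ^[n + s] γ 0 = Δ_[1] ^[n] γ r := by
    simpa [add_comm n, Function.iterate_add_apply, nsmul_eq_mul] using
      (shift_eq_sum_fwdDiff_iter 1 (Δ_[1] ^[n] γ) r 0).symm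
  simp_rw [hterm, mul_left_comm _ ((-1 : K) ^ n), ← mul_sum]
  rw [sum_choose_mul_sum_choose_mul_add (fun i => (i.choose n : K) * Δ_[1] ^[i] γ 0)]
  simp_rw [← mul_assoc]
  rw [sum_choose_mul_choose_mul, hshift, mul_assoc]

end Combinatorics

theorem iterate_derivative_eval_zero {R : Type*} [CommSemiring R] (p : R[X]) (k : ℕ) :
    (derivative^[k] p).eval 0 = k.factorial * p.coeff k := by
  rw [← coeff_zero_eq_eval_zero, coeff_iterate_derivative, zero_add, Nat.descFactorial_self,
    nsmul_eq_mul]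

theorem laguerrePoly_coeff (n i : ℕ) :
    (laguerrePoly n).coeff i = (-1) ^ i / i.factorial * n.choose i := by
  simp only [laguerrePoly, finsetSum_coeff, coeff_C_mul, coeff_X_pow, mul_ite, mul_one, mul_zero,
    sum_ite_eq, mem_range]
  split_ifs with h
  · rfl
  · rw [Nat.choose_eq_zero_of_lt (by omega)]
    simp

theorem X_pow_eq_sum_smul_laguerrePoly (m : ℕ) :
    (X : ℝ[X]) ^ m = ∑ j ∈ range (m + 1),
      ((-1) ^ m * m.factorial * (-1) ^ (m - j) * m.choose j : ℝ) • laguerrePoly j := by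
  ext i
  have hsum := sum_neg_one_pow_mul_choose_mul_choose (R := ℝ) m i
  simp only [finsetSum_coeff, coeff_smul, smul_eq_mul, laguerrePoly_coeff, coeff_X_pow]
  calc (if i = m then (1 : ℝ) else 0)
      = (-1) ^ m * m.factorial * ((-1) ^ i / i.factorial) * (if m = i then 1 else 0) := by
        by_cases h : i = m
        · subst h
          field_simp
          rw [← pow_mul, mul_comm, pow_mul]
          norm_num
        · rw [if_neg h, if_neg (Ne.symm h), mul_zero]
    _ = _ := by
        rw [← hsum, mul_sum]
        exact sum_congr rfl fun j _ => by ring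

section DiagonalOperator

variable {T : ℝ[X] →ₗ[ℝ] ℝ[X]} {γ : ℕ → ℝ} {Q : ℕ → ℝ[X]}

theorem coeff_apply_X_pow_of_laguerre (hT : ∀ n, T (laguerrePoly n) = γ n • laguerrePoly n)
    (m r : ℕ) :
    (T (X ^ m)).coeff r = (-1) ^ m * m.factorial * ((-1) ^ r / r.factorial) *
      ∑ j ∈ range (m + 1), (m.choose j : ℝ) * (j.choose r : ℝ) * ((-1) ^ (m - j) * γ j) := by
  rw [X_pow_eq_sum_smul_laguerrePoly, map_sum, finsetSum_coeff, mul_sum]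
  refine sum_congr rfl fun j _ => ?_
  rw [map_smul, hT, smul_smul, coeff_smul, smul_eq_mul, laguerrePoly_coeff]
  ring

theorem coeff_apply_X_pow_add
    (hQ : ∀ p : ℝ[X], T p = ∑ k ∈ range (p.natDegree + 1), Q k * derivative^[k] p) (n r : ℕ) :
    (T (X ^ (n + r))).coeff r = (n + r).descFactorial n *
      ∑ t ∈ range (r + 1), (r.choose t : ℝ) * (derivative^[t] (Q (t + n))).eval 0 := by
  have hterm : ∀ k, (Q k * derivative^[k] (X ^ (n + r))).coeff r =
      (n + r).descFactorial k * if n + r - k ≤ r then (Q k).coeff (r - (n + r - k)) else 0 := by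
    intro k
    rw [iterate_derivative_X_pow_eq_C_mul, mul_left_comm, coeff_C_mul, coeff_mul_X_pow']
  rw [hQ, natDegree_X_pow, finsetSum_coeff, show n + r + 1 = n + (r + 1) by omega, sum_range_add,
    mul_sum]
  simp only [hterm]
  rw [sum_eq_zero fun k hk => by rw [if_neg (by have := mem_range.1 hk; omega), mul_zero],
    zero_add]
  refine sum_congr rfl fun t ht => ?_
  have ht : t ≤ r := Nat.lt_succ_iff.1 (mem_range.1 ht)
  have hdesc := Nat.descFactorial_mul_descFactorial (n := n + r) (Nat.le_add_right n t)
  rw [show n + r - n = r by omega, show n + t - n = t by omega,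
    Nat.descFactorial_eq_factorial_mul_choose] at hdesc
  rw [if_pos (by omega), show r - (n + r - (n + t)) = t by omega, iterate_derivative_eval_zero,
    add_comm t n, ← hdesc]
  push_cast
  ring

theorem sum_choose_mul_iterate_derivative_eval_zero
    (hT : ∀ n, T (laguerrePoly n) = γ n • laguerrePoly n)
    (hQ : ∀ p : ℝ[X], T p = ∑ k ∈ range (p.natDegree + 1), Q k * derivative^[k] p) (n r : ℕ) :
    ∑ t ∈ range (r + 1), (r.choose t : ℝ) * (derivative^[t] (Q (t + n))).eval 0 =
      (-1) ^ n * ((r + n).choose n : ℝ) * Δ_[1] ^[n] γ r := by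
  have hdesc : ((n + r).descFactorial n : ℝ) ≠ 0 :=
    Nat.cast_ne_zero.2 (Nat.descFactorial_pos.2 (Nat.le_add_right n r)).ne'
  have hfac : ((n + r).factorial : ℝ) = r.factorial * (n + r).descFactorial n := by
    have h := Nat.factorial_mul_descFactorial (Nat.le_add_right n r)
    rw [Nat.add_sub_cancel_left] at h
    exact_mod_cast h.symm
  apply mul_left_cancel₀ hdesc
  rw [← coeff_apply_X_pow_add hQ, coeff_apply_X_pow_of_laguerre hT, sum_choose_mul_choose_mul,
    fwdDiff_iter_eq_sum_choose_mul, hfac, add_comm r n, ← Nat.choose_symm_add]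
  have hexp : ∀ s, n + r - (r + s) = n - s := fun s => by omega
  have hsign : (-1 : ℝ) ^ (n + r) * (-1) ^ r = (-1) ^ n := by
    rw [pow_add, mul_assoc, ← mul_pow]
    norm_num
  simp_rw [hexp]
  field_simp
  rw [hsign, mul_comm ((-1 : ℝ) ^ n)]
  exact congrArg _ (sum_congr rfl fun _ _ => by ring)

end DiagonalOperator

/-- values of the derivatives at 0 of the differential coefficients of a
Laguerre diagonal differential operator, and the resulting eigenvalue families b. -/
theorem stmt_16 (γ : ℕ → ℝ)
    (T : Polynomial ℝ →ₗ[ℝ] Polynomial ℝ)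
    (hT : ∀ n, T (laguerrePoly n) = γ n • laguerrePoly n)
    (Q : ℕ → Polynomial ℝ)
    (hQ : ∀ p : Polynomial ℝ,
      T p = ∑ k ∈ Finset.range (p.natDegree + 1), Q k * (Polynomial.derivative^[k] p))
    (g : ℕ → ℝ)
    (hg : ∀ k, g k = ∑ j ∈ Finset.range (k + 1), (k.choose j : ℝ) * (-1) ^ (k - j) * γ j)
    (b : ℕ → ℕ → ℝ)
    (hb : ∀ n m, b n m = ∑ k ∈ Finset.range (m + 1),
      (m.choose k : ℝ) * (Polynomial.derivative^[k] (Q (k + n))).eval 0) :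
    (∀ n k : ℕ,
      (Polynomial.derivative^[k] (Q (k + n))).eval 0 =
        ((-1) ^ n / n.factorial) * ∑ j ∈ Finset.range (n + 1),
          (n.choose j : ℝ) * ((k + j).descFactorial n : ℝ) * g (k + j)) ∧
    (∀ n m : ℕ,
      b n m = ∑ k ∈ Finset.range (m + 1), (m.choose k : ℝ) *
        (((-1) ^ n / n.factorial) * ∑ j ∈ Finset.range (n + 1),
          (n.choose j : ℝ) * ((k + j).descFactorial n : ℝ) * g (k + j))) := by
  have hg_fwdDiff : ∀ k, g k = Δ_[1] ^[k] γ 0 := fun k => by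
    rw [hg, fwdDiff_iter_eq_sum_choose_mul]
    exact sum_congr rfl fun j _ => by rw [zero_add]; ring
  have hcoeff : ∀ n k : ℕ, (derivative^[k] (Q (k + n))).eval 0 =
      ((-1) ^ n / n.factorial) * ∑ j ∈ range (n + 1),
        (n.choose j : ℝ) * ((k + j).descFactorial n : ℝ) * g (k + j) := by
    intro n
    simp_rw [hg_fwdDiff]
    refine congrFun (eq_of_sum_range_choose_smul_eq fun r => ?_)
    simp only [nsmul_eq_mul]
    rw [sum_choose_mul_iterate_derivative_eval_zero hT hQ,
      sum_choose_mul_sum_choose_mul_descFactorial_fwdDiff]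
  refine ⟨hcoeff, fun n m => ?_⟩
  rw [hb]
  simp_rw [hcoeff]
end
end
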